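/- arXiv:1712.03794 — 2 statements merged into one kernel-verified Lean document; each statement's English description precedes it below -/
import Mathlib

section
/- Let T be a bounded, left-invertible and analytic operator on a complex Hilbert space H, E = ker T*, P_E the orthogonal projection onto E, L = (T*T)⁻¹T*. If the bounded operator A on H is a multiplication operator with symbol φ : ℕ → B(E) and the bounded operator B is a multiplication operator with symbol ψ : ℕ → B(E), then AB is a multiplication operator with symbol φ*ψ, where (φ*ψ)(k) = Σ_{j=0}^{k} φ(j)ψ(k−j). -/
/-!
Writing `c f n = P_E L^n f` for the "Taylor coefficients" of `f`, a multiplication operator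
acts on coefficient sequences as convolution by its symbol; composing two of them convolves
twice, and regrouping the resulting triple sum is associativity of the Cauchy product.
-/

open Finset

theorem Finset.sum_range_sum_range_tsub_tsub {M : Type*} [AddCommMonoid M] (n : ℕ)
    (g : ℕ → ℕ → ℕ → M) :
    ∑ k ∈ range (n + 1), ∑ j ∈ range (n - k + 1), g k j (n - k - j) =
      ∑ m ∈ range (n + 1), ∑ j ∈ range (m + 1), g j (m - j) (n - m) := by
  symm
  calc ∑ m ∈ range (n + 1), ∑ j ∈ range (m + 1), g j (m - j) (n - m)
      = ∑ m ∈ range (n + 1), ∑ j ∈ range (m + 1), g j (m - j) (n - (j + (m - j))) := by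
        refine sum_congr rfl fun m _ ↦ sum_congr rfl fun j hj ↦ ?_
        rw [Nat.add_sub_cancel' (Nat.lt_succ_iff.mp (mem_range.mp hj))]
    _ = ∑ k ∈ range (n + 1), ∑ j ∈ range (n + 1 - k), g k j (n - (k + j)) :=
        sum_range_diag_flip (n + 1) fun k j ↦ g k j (n - (k + j))
    _ = ∑ k ∈ range (n + 1), ∑ j ∈ range (n - k + 1), g k j (n - k - j) := by
        refine sum_congr rfl fun k hk ↦ ?_
        rw [Nat.sub_add_comm (Nat.lt_succ_iff.mp (mem_range.mp hk))]
        simp only [Nat.sub_sub]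

section MultiplicationOperator

variable {R H E : Type*} [Semiring R] [TopologicalSpace E] [AddCommMonoid E] [Module R E]
  [ContinuousAdd E]

def cauchyProduct (φ ψ : ℕ → E →L[R] E) (k : ℕ) : E →L[R] E :=
  ∑ j ∈ range (k + 1), φ j ∘L ψ (k - j)

def IsMultiplicationOperator (c : H → ℕ → E) (A : H → H) (φ : ℕ → E →L[R] E) : Prop :=
  ∀ f n, c (A f) n = ∑ k ∈ range (n + 1), φ k (c f (n - k))

theorem IsMultiplicationOperator.comp {c : H → ℕ → E} {A B : H → H} {φ ψ : ℕ → E →L[R] E}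
    (hA : IsMultiplicationOperator c A φ) (hB : IsMultiplicationOperator c B ψ) :
    IsMultiplicationOperator c (A ∘ B) (cauchyProduct φ ψ) := by
  intro f n
  simp only [Function.comp_apply, hA (B f) n, hB f, map_sum, cauchyProduct,
    _root_.sum_apply, ContinuousLinearMap.comp_apply]
  exact sum_range_sum_range_tsub_tsub n fun k j i ↦ φ k (ψ j (c f i))

end MultiplicationOperator

theorem stmt_3_general
    {H : Type*} [NormedAddCommGroup H] [InnerProductSpace ℂ H] [CompleteSpace H]
    (T : H →L[ℂ] H)
    (L : H →L[ℂ] H)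
    (A B : H →L[ℂ] H)
    (φ ψ : ℕ → (LinearMap.ker (ContinuousLinearMap.adjoint T : H →ₗ[ℂ] H) →L[ℂ]
      LinearMap.ker (ContinuousLinearMap.adjoint T : H →ₗ[ℂ] H)))
    (hA : ∀ (f : H) (n : ℕ),
      Submodule.orthogonalProjectionOnto (LinearMap.ker (ContinuousLinearMap.adjoint T : H →ₗ[ℂ] H)) ((L ^ n) (A f)) =
        ∑ k ∈ Finset.range (n + 1), φ k
          (Submodule.orthogonalProjectionOnto (LinearMap.ker (ContinuousLinearMap.adjoint T : H →ₗ[ℂ] H))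
            ((L ^ (n - k)) f)))
    (hB : ∀ (f : H) (n : ℕ),
      Submodule.orthogonalProjectionOnto (LinearMap.ker (ContinuousLinearMap.adjoint T : H →ₗ[ℂ] H)) ((L ^ n) (B f)) =
        ∑ k ∈ Finset.range (n + 1), ψ k
          (Submodule.orthogonalProjectionOnto (LinearMap.ker (ContinuousLinearMap.adjoint T : H →ₗ[ℂ] H))
            ((L ^ (n - k)) f))) :
    ∀ (f : H) (n : ℕ),
      Submodule.orthogonalProjectionOnto (LinearMap.ker (ContinuousLinearMap.adjoint T : H →ₗ[ℂ] H))
          ((L ^ n) ((A * B) f)) =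
        ∑ k ∈ Finset.range (n + 1),
          (∑ j ∈ Finset.range (k + 1), φ j ∘L ψ (k - j))
            (Submodule.orthogonalProjectionOnto (LinearMap.ker (ContinuousLinearMap.adjoint T : H →ₗ[ℂ] H))
              ((L ^ (n - k)) f)) :=
  IsMultiplicationOperator.comp (A := A) (B := B)
    (c := fun f n ↦ Submodule.orthogonalProjectionOnto
      (LinearMap.ker (ContinuousLinearMap.adjoint T : H →ₗ[ℂ] H)) ((L ^ n) f)) hA hB

/-- Let `T` be bounded, left-invertible and analytic on a complex Hilbert
space `H`, `E = ker T*`, `L = (T*T)⁻¹T*`.  If `A` is a multiplication operator with symbol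
`φ` and `B` is a multiplication operator with symbol `ψ`, then `AB` is a multiplication
operator with symbol `φ*ψ`, the Cauchy product `(φ*ψ)(k) = Σ_{j=0}^{k} φ(j)ψ(k−j)`. -/
theorem stmt_3
    {H : Type*} [NormedAddCommGroup H] [InnerProductSpace ℂ H] [CompleteSpace H]
    (T S : H →L[ℂ] H)
    (hbelow : ∃ α : ℝ, 0 < α ∧ ∀ f : H, α * ‖f‖ ^ 2 ≤ ‖T f‖ ^ 2)
    (hanalytic : (⨅ n : ℕ, LinearMap.range ((T ^ n : H →L[ℂ] H) : H →ₗ[ℂ] H)) = ⊥)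
    (hS1 : S * (ContinuousLinearMap.adjoint T * T) = 1)
    (hS2 : (ContinuousLinearMap.adjoint T * T) * S = 1)
    (L : H →L[ℂ] H) (hL : L = S * ContinuousLinearMap.adjoint T)
    (A B : H →L[ℂ] H)
    (φ ψ : ℕ → (LinearMap.ker (ContinuousLinearMap.adjoint T : H →ₗ[ℂ] H) →L[ℂ]
      LinearMap.ker (ContinuousLinearMap.adjoint T : H →ₗ[ℂ] H)))
    (hA : ∀ (f : H) (n : ℕ),
      Submodule.orthogonalProjectionOnto (LinearMap.ker (ContinuousLinearMap.adjoint T : H →ₗ[ℂ] H)) ((L ^ n) (A f)) =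
        ∑ k ∈ Finset.range (n + 1), φ k
          (Submodule.orthogonalProjectionOnto (LinearMap.ker (ContinuousLinearMap.adjoint T : H →ₗ[ℂ] H))
            ((L ^ (n - k)) f)))
    (hB : ∀ (f : H) (n : ℕ),
      Submodule.orthogonalProjectionOnto (LinearMap.ker (ContinuousLinearMap.adjoint T : H →ₗ[ℂ] H)) ((L ^ n) (B f)) =
        ∑ k ∈ Finset.range (n + 1), ψ k
          (Submodule.orthogonalProjectionOnto (LinearMap.ker (ContinuousLinearMap.adjoint T : H →ₗ[ℂ] H))
            ((L ^ (n - k)) f))) :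
    ∀ (f : H) (n : ℕ),
      Submodule.orthogonalProjectionOnto (LinearMap.ker (ContinuousLinearMap.adjoint T : H →ₗ[ℂ] H))
          ((L ^ n) ((A * B) f)) =
        ∑ k ∈ Finset.range (n + 1),
          (∑ j ∈ Finset.range (k + 1), φ j ∘L ψ (k - j))
            (Submodule.orthogonalProjectionOnto (LinearMap.ker (ContinuousLinearMap.adjoint T : H →ₗ[ℂ] H))
              ((L ^ (n - k)) f)) :=
  stmt_3_general T L A B φ ψ hA hB
end

section
/- Let S_λ be a bounded balanced weighted shift with positive weights on a countably infinite rooted directed tree with vertex set V, and assume S_λ is bounded below by a constant c > 0 (‖S_λ f‖ ≥ c‖f‖ for all f). Let {e'_j}_{j∈J} be an orthonormal basis of ker S_λ* such that e'_j ∈ ℓ²(V_{k_j}) for some k_j ∈ ℕ, for every j ∈ J. Then for all i, j ∈ J there exist constants c_{ij} > 0 and C_{ij} > 0 such that c_{ij} ≤ ‖S_λ^n e'_i‖ / ‖S_λ^n e'_j‖ ≤ C_{ij} for every n ∈ ℕ. -/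
/-!
Since `S` moves `ℓ²(V_K)` into `ℓ²(V_{K+1})` and `‖S f‖² = ∑ᵤ ‖S e_u‖² |f u|²`, balancedness
makes `S` a multiple `β_K` of an isometry on each level `ℓ²(V_K)`, hence so is every power `S ^ n`.
For unit vectors `f ∈ ℓ²(V_K)` and `g ∈ ℓ²(V_{K+d})` this gives
`‖S ^ n g‖ * ‖S ^ d f‖ = ‖S ^ d (S ^ n f)‖`, and `c ^ d ‖h‖ ≤ ‖S ^ d h‖ ≤ ‖S‖ ^ d ‖h‖` bounds
the ratio `‖S ^ n g‖ / ‖S ^ n f‖` between `(c / ‖S‖) ^ d` and `(‖S‖ / c) ^ d`, uniformly in `n`.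
-/

/-- A countably infinite rooted directed tree, encoded by a root, a parent map and a depth
function. -/
structure RootedDirectedTree (V : Type*) where
  root : V
  par : V → V
  depth : V → ℕ
  depth_eq_zero_iff : ∀ v, depth v = 0 ↔ v = root
  par_root : par root = root
  depth_par : ∀ v, v ≠ root → depth (par v) = depth v - 1

theorem lp.hasSum_norm_sq {α : Type*} {E : α → Type*} [∀ i, NormedAddCommGroup (E i)]
    (f : lp E 2) : HasSum (fun i => ‖f i‖ ^ 2) (‖f‖ ^ 2) := by
  simpa using lp.hasSum_norm (p := 2) (by norm_num) f

section PowBounds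

variable {𝕜 E : Type*} [NontriviallyNormedField 𝕜] [SeminormedAddCommGroup E] [NormedSpace 𝕜 E]

theorem ContinuousLinearMap.pow_mul_norm_le_norm_pow_apply {T : E →L[𝕜] E} {c : ℝ} (hc : 0 ≤ c)
    (hT : ∀ x, c * ‖x‖ ≤ ‖T x‖) (n : ℕ) (x : E) : c ^ n * ‖x‖ ≤ ‖(T ^ n) x‖ := by
  induction n generalizing x with
  | zero => simp
  | succ n ih =>
    calc c ^ (n + 1) * ‖x‖ = c ^ n * (c * ‖x‖) := by ring
      _ ≤ c ^ n * ‖T x‖ := by gcongr; exact hT x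
      _ ≤ ‖(T ^ (n + 1)) x‖ := by rw [pow_succ]; exact ih (T x)

theorem ContinuousLinearMap.norm_pow_apply_le (T : E →L[𝕜] E) (n : ℕ) (x : E) :
    ‖(T ^ n) x‖ ≤ ‖T‖ ^ n * ‖x‖ := by
  induction n generalizing x with
  | zero => simp
  | succ n ih =>
    calc ‖(T ^ (n + 1)) x‖ = ‖(T ^ n) (T x)‖ := by rw [pow_succ]; rfl
      _ ≤ ‖T‖ ^ n * ‖T x‖ := ih (T x)
      _ ≤ ‖T‖ ^ n * (‖T‖ * ‖x‖) := by gcongr; exact T.le_opNorm x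
      _ = ‖T‖ ^ (n + 1) * ‖x‖ := by ring

end PowBounds

namespace RootedDirectedTree

variable {V : Type*} (t : RootedDirectedTree V)

local notation "ℓ²(" V ")" => lp (fun _ : V => ℂ) 2

def IsSupportedOnLevel (K : ℕ) (f : ℓ²(V)) : Prop :=
  ∀ u, t.depth u ≠ K → f u = 0

variable [DecidableEq V]

def IsWeightedShift (lam : V → ℝ) (S : ℓ²(V) →L[ℂ] ℓ²(V)) : Prop :=
  ∀ f v, S f v = if v = t.root then 0 else (lam v : ℂ) * f (t.par v)

def IsBalanced (S : ℓ²(V) →L[ℂ] ℓ²(V)) : Prop :=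
  ∀ u v, t.depth u = t.depth v → ‖S (lp.single 2 u 1)‖ = ‖S (lp.single 2 v 1)‖

variable {t} {lam : V → ℝ} {S : ℓ²(V) →L[ℂ] ℓ²(V)}

theorem IsWeightedShift.norm_apply_sq (hS : t.IsWeightedShift lam S) (f : ℓ²(V)) (v : V) :
    ‖S f v‖ ^ 2 = (if v = t.root then 0 else lam v ^ 2) * ‖f (t.par v)‖ ^ 2 := by
  rw [hS]
  split_ifs <;> simp [mul_pow]

theorem IsWeightedShift.hasSum_fiber (hS : t.IsWeightedShift lam S) (f : ℓ²(V)) :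
    HasSum (fun u => (∑' v : t.par ⁻¹' {u}, if ↑v = t.root then 0 else lam v ^ 2) * ‖f u‖ ^ 2)
      (‖S f‖ ^ 2) := by
  have h := (lp.hasSum_norm_sq (S f)).congr_fun fun v => (hS.norm_apply_sq f v).symm
  refine (h.tsum_fiberwise t.par).congr_fun fun u => ?_
  rw [← tsum_mul_right]
  exact tsum_congr fun v => by rw [show t.par v = u from v.2]

theorem IsWeightedShift.norm_apply_sq_eq_tsum (hS : t.IsWeightedShift lam S) (f : ℓ²(V)) :
    ‖S f‖ ^ 2 = ∑' u, ‖S (lp.single 2 u 1)‖ ^ 2 * ‖f u‖ ^ 2 := by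
  have hweight (u : V) : (∑' v : t.par ⁻¹' {u}, if ↑v = t.root then 0 else lam v ^ 2) =
      ‖S (lp.single 2 u 1)‖ ^ 2 := by
    have h := hS.hasSum_fiber (lp.single 2 u 1)
    rw [← (hasSum_single u fun u' hu' => by simp [hu']).unique h]
    simp
  simp_rw [← hweight]
  exact (hS.hasSum_fiber f).tsum_eq.symm

theorem IsWeightedShift.norm_apply_of_isSupportedOnLevel (hS : t.IsWeightedShift lam S)
    (hbal : t.IsBalanced S) {K : ℕ} {f : ℓ²(V)} (hf : t.IsSupportedOnLevel K f) {u : V}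
    (hu : t.depth u = K) : ‖S f‖ = ‖S (lp.single 2 u 1)‖ * ‖f‖ := by
  rw [← sq_eq_sq₀ (norm_nonneg _) (by positivity), hS.norm_apply_sq_eq_tsum, mul_pow,
    (lp.hasSum_norm_sq f).tsum_eq.symm, ← tsum_mul_left]
  refine tsum_congr fun v => ?_
  by_cases hv : t.depth v = K
  · rw [hbal v u (hv.trans hu.symm)]
  · simp [hf v hv]

theorem IsWeightedShift.isSupportedOnLevel_apply (hS : t.IsWeightedShift lam S) {K : ℕ}
    {f : ℓ²(V)} (hf : t.IsSupportedOnLevel K f) : t.IsSupportedOnLevel (K + 1) (S f) := by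
  intro v hv
  rw [hS]
  split_ifs with hroot
  · rfl
  · have h0 : t.depth v ≠ 0 := fun h => hroot ((t.depth_eq_zero_iff v).mp h)
    rw [hf (t.par v) (by rw [t.depth_par v hroot]; omega), mul_zero]

theorem IsWeightedShift.isSupportedOnLevel_pow_apply (hS : t.IsWeightedShift lam S) {K : ℕ}
    {f : ℓ²(V)} (hf : t.IsSupportedOnLevel K f) (n : ℕ) :
    t.IsSupportedOnLevel (K + n) ((S ^ n) f) := by
  induction n with
  | zero => simpa using hf
  | succ n ih => rw [pow_succ']; exact hS.isSupportedOnLevel_apply ih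

theorem IsWeightedShift.exists_norm_apply_eq_mul (hS : t.IsWeightedShift lam S)
    (hbal : t.IsBalanced S) (K : ℕ) :
    ∃ β ≥ 0, ∀ f, t.IsSupportedOnLevel K f → ‖S f‖ = β * ‖f‖ := by
  by_cases hK : ∃ u, t.depth u = K
  · obtain ⟨u, hu⟩ := hK
    exact ⟨_, norm_nonneg _, fun f hf => hS.norm_apply_of_isSupportedOnLevel hbal hf hu⟩
  · refine ⟨0, le_rfl, fun f hf => ?_⟩
    have : f = 0 := lp.ext <| funext fun u => hf u fun hu => hK ⟨u, hu⟩
    simp [this]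

theorem IsWeightedShift.exists_norm_pow_apply_eq_mul (hS : t.IsWeightedShift lam S)
    (hbal : t.IsBalanced S) (n K : ℕ) :
    ∃ r ≥ 0, ∀ f, t.IsSupportedOnLevel K f → ‖(S ^ n) f‖ = r * ‖f‖ := by
  induction n generalizing K with
  | zero => exact ⟨1, zero_le_one, fun f _ => by simp⟩
  | succ n ih =>
    obtain ⟨β, hβ, hSβ⟩ := hS.exists_norm_apply_eq_mul hbal K
    obtain ⟨r, hr, hSr⟩ := ih (K + 1)
    refine ⟨r * β, mul_nonneg hr hβ, fun f hf => ?_⟩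
    rw [pow_succ]
    change ‖(S ^ n) (S f)‖ = _
    rw [hSr _ (hS.isSupportedOnLevel_apply hf), hSβ f hf, mul_assoc]

theorem IsWeightedShift.norm_pow_apply_le_of_isSupportedOnLevel_add (hS : t.IsWeightedShift lam S)
    (hbal : t.IsBalanced S) {c : ℝ} (hc : 0 < c) (hbelow : ∀ f, c * ‖f‖ ≤ ‖S f‖) {K d : ℕ}
    {f g : ℓ²(V)} (hf : t.IsSupportedOnLevel K f) (hg : t.IsSupportedOnLevel (K + d) g)
    (hfg : ‖f‖ = ‖g‖) (n : ℕ) :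
    ‖(S ^ n) g‖ ≤ (‖S‖ / c) ^ d * ‖(S ^ n) f‖ ∧ ‖(S ^ n) f‖ ≤ (‖S‖ / c) ^ d * ‖(S ^ n) g‖ := by
  obtain ⟨r, hr, hSr⟩ := hS.exists_norm_pow_apply_eq_mul hbal n (K + d)
  -- `g` and `S ^ d f` lie on the same level, so `S ^ n` scales both by `r`.
  have hg' : ‖(S ^ n) g‖ = r * ‖f‖ := by rw [hSr g hg, hfg]
  have hfd : ‖(S ^ d) ((S ^ n) f)‖ = r * ‖(S ^ d) f‖ := by
    rw [← hSr _ (hS.isSupportedOnLevel_pow_apply hf d)]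
    change ‖(S ^ d * S ^ n) f‖ = ‖(S ^ n * S ^ d) f‖
    rw [← pow_add, ← pow_add, add_comm]
  have hlo := S.pow_mul_norm_le_norm_pow_apply hc.le hbelow d
  have hup := S.norm_pow_apply_le d
  rw [div_pow, div_mul_eq_mul_div, div_mul_eq_mul_div, le_div_iff₀ (pow_pos hc d),
    le_div_iff₀ (pow_pos hc d)]
  constructor
  · calc ‖(S ^ n) g‖ * c ^ d = r * (c ^ d * ‖f‖) := by rw [hg']; ring
      _ ≤ r * ‖(S ^ d) f‖ := by gcongr; exact hlo f
      _ = ‖(S ^ d) ((S ^ n) f)‖ := hfd.symm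
      _ ≤ ‖S‖ ^ d * ‖(S ^ n) f‖ := hup _
  · calc ‖(S ^ n) f‖ * c ^ d ≤ ‖(S ^ d) ((S ^ n) f)‖ := by rw [mul_comm]; exact hlo _
      _ = r * ‖(S ^ d) f‖ := hfd
      _ ≤ r * (‖S‖ ^ d * ‖f‖) := by gcongr; exact hup f
      _ = ‖S‖ ^ d * ‖(S ^ n) g‖ := by rw [hg']; ring

theorem IsWeightedShift.exists_norm_pow_apply_le_mul (hS : t.IsWeightedShift lam S)
    (hbal : t.IsBalanced S) {c : ℝ} (hc : 0 < c) (hbelow : ∀ f, c * ‖f‖ ≤ ‖S f‖) {K K' : ℕ}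
    {f g : ℓ²(V)} (hf : t.IsSupportedOnLevel K f) (hg : t.IsSupportedOnLevel K' g)
    (hfg : ‖f‖ = ‖g‖) :
    ∃ C, ∀ n, ‖(S ^ n) f‖ ≤ C * ‖(S ^ n) g‖ ∧ ‖(S ^ n) g‖ ≤ C * ‖(S ^ n) f‖ := by
  rcases le_total K K' with h | h
  · obtain ⟨d, rfl⟩ := Nat.exists_eq_add_of_le h
    exact ⟨_, fun n =>
      (hS.norm_pow_apply_le_of_isSupportedOnLevel_add hbal hc hbelow hf hg hfg n).symm⟩
  · obtain ⟨d, rfl⟩ := Nat.exists_eq_add_of_le h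
    exact ⟨_, hS.norm_pow_apply_le_of_isSupportedOnLevel_add hbal hc hbelow hg hf hfg.symm⟩

end RootedDirectedTree

theorem stmt_14_general {V : Type} [DecidableEq V]
    (t : RootedDirectedTree V)
    (lam : V → ℝ)
    (Sl : lp (fun _ : V => ℂ) 2 →L[ℂ] lp (fun _ : V => ℂ) 2)
    (hSl : ∀ (f : lp (fun _ : V => ℂ) 2) (v : V),
      Sl f v = if v = t.root then 0 else (lam v : ℂ) * f (t.par v))
    (hbal : ∀ u v : V, t.depth u = t.depth v →
      ‖Sl (lp.single 2 u (1 : ℂ))‖ = ‖Sl (lp.single 2 v (1 : ℂ))‖)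
    (c : ℝ) (hc : 0 < c)
    (hbelow : ∀ f : lp (fun _ : V => ℂ) 2, c * ‖f‖ ≤ ‖Sl f‖)
    (J : Type) (b : J → lp (fun _ : V => ℂ) 2) (k : J → ℕ)
    (hb_on : Orthonormal ℂ b)
    (hb_sep : ∀ (j : J) (u : V), t.depth u ≠ k j → b j u = 0) :
    ∀ i j : J, ∃ cij Cij : ℝ, 0 < cij ∧ 0 < Cij ∧
      ∀ n : ℕ, cij ≤ ‖(Sl ^ n) (b i)‖ / ‖(Sl ^ n) (b j)‖ ∧
        ‖(Sl ^ n) (b i)‖ / ‖(Sl ^ n) (b j)‖ ≤ Cij := by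
  intro i j
  have hS : t.IsWeightedShift lam Sl := hSl
  obtain ⟨C, hC⟩ := hS.exists_norm_pow_apply_le_mul hbal hc hbelow (hb_sep i) (hb_sep j)
    ((hb_on.1 i).trans (hb_on.1 j).symm)
  have hpos (n : ℕ) : 0 < ‖(Sl ^ n) (b j)‖ :=
    (by simp [hb_on.1 j, hc] : 0 < c ^ n * ‖b j‖).trans_le
      (Sl.pow_mul_norm_le_norm_pow_apply hc.le hbelow n (b j))
  have hCpos : 0 < C := zero_lt_one.trans_le (by simpa [hb_on.1 i, hb_on.1 j] using (hC 0).2)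
  refine ⟨C⁻¹, C, inv_pos.2 hCpos, hCpos, fun n => ⟨?_, ?_⟩⟩
  · rw [le_div_iff₀ (hpos n), inv_mul_le_iff₀ hCpos]
    exact (hC n).2
  · rw [div_le_iff₀ (hpos n)]
    exact (hC n).1

/-- Let `S_λ` be a bounded balanced weighted shift, bounded below by
`c > 0`, and let `{e'_j}` be an orthonormal basis of `ker S_λ*` with `e'_j ∈ ℓ²(V_{k_j})`.
Then for all `i, j` there are constants `0 < c_{ij}` and `0 < C_{ij}` such that
`c_{ij} ≤ ‖S_λ^n e'_i‖ / ‖S_λ^n e'_j‖ ≤ C_{ij}` for every `n`. -/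
theorem stmt_14 {V : Type} [Countable V] [Infinite V] [DecidableEq V]
    (t : RootedDirectedTree V)
    (lam : V → ℝ) (hlam : ∀ v, v ≠ t.root → 0 < lam v)
    (Sl : lp (fun _ : V => ℂ) 2 →L[ℂ] lp (fun _ : V => ℂ) 2)
    (hSl : ∀ (f : lp (fun _ : V => ℂ) 2) (v : V),
      Sl f v = if v = t.root then 0 else (lam v : ℂ) * f (t.par v))
    (hbal : ∀ u v : V, t.depth u = t.depth v →
      ‖Sl (lp.single 2 u (1 : ℂ))‖ = ‖Sl (lp.single 2 v (1 : ℂ))‖)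
    (c : ℝ) (hc : 0 < c)
    (hbelow : ∀ f : lp (fun _ : V => ℂ) 2, c * ‖f‖ ≤ ‖Sl f‖)
    (J : Type) (b : J → lp (fun _ : V => ℂ) 2) (k : J → ℕ)
    (hb_on : Orthonormal ℂ b)
    (hb_ker : ∀ j, b j ∈ LinearMap.ker (ContinuousLinearMap.adjoint Sl : lp (fun _ : V => ℂ) 2 →ₗ[ℂ] lp (fun _ : V => ℂ) 2))
    (hb_sep : ∀ (j : J) (u : V), t.depth u ≠ k j → b j u = 0)
    (hb_total : (LinearMap.ker (ContinuousLinearMap.adjoint Sl : lp (fun _ : V => ℂ) 2 →ₗ[ℂ] lp (fun _ : V => ℂ) 2) :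
        Set (lp (fun _ : V => ℂ) 2)) ⊆
      closure (Submodule.span ℂ (Set.range b) : Set (lp (fun _ : V => ℂ) 2))) :
    ∀ i j : J, ∃ cij Cij : ℝ, 0 < cij ∧ 0 < Cij ∧
      ∀ n : ℕ, cij ≤ ‖(Sl ^ n) (b i)‖ / ‖(Sl ^ n) (b j)‖ ∧
        ‖(Sl ^ n) (b i)‖ / ‖(Sl ^ n) (b j)‖ ≤ Cij :=
  stmt_14_general t lam Sl hSl hbal c hc hbelow J b k hb_on hb_sep
end
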